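/- Let the filtration (𝓕_n)_{n∈ℕ} on (Ω, 𝓕) satisfy condition A, and let M be a convex set of mutually equivalent probability measures such that P(A_s^n) > 0 for all P ∈ M, s, n, and there exists a measure P_{i₀} ∈ M with P(A_j^{n+1})/P(A_s^n) ≤ P_{i₀}(A_j^{n+1})/P_{i₀}(A_s^n) for all P ∈ M, all n, all s and all j ∈ I_s^n. Let ξ be a nonnegative integrable random variable with E^P ξ = 1 for every P ∈ M. Then the conditional expectation E^P[ξ | 𝓕_m] does not depend on P ∈ M (any two versions coincide a.s.), and the process (E^P[ξ | 𝓕_m])_{m∈ℕ} is a martingale relative to every measure in M; in particular it is a local regular supermartingale. -/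

import Mathlib

/-!
Write `P[|A m s]` for `P` conditioned on the cell `A m s`. For fixed `n, s` the one-step
conditional probabilities `P[A (n+1) j | A n s]`, `j ∈ I n s`, sum to `1`, so the domination by
`P_{i₀}` forces them to equal those of `P_{i₀}`. Multiplying along chains of nested cells,
`P[|A m s]` and `P_{i₀}[|A m s]` agree on all cells, which form a π-system generating `𝓕`, hence
they are equal. Every `ℱ m`-measurable function is constant on the atom `A m s`, so
`E^P[ξ | ℱ m] = ∫ ξ ∂P[|A m s]` pointwise on `A m s`: it is the same function for all `P ∈ M`,
and a martingale for every `Q ∈ M` because it is `Q`'s own conditional expectation.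
-/

open MeasureTheory Filter Set
open scoped ENNReal

/-- **Condition A** of the paper. -/
structure CondA {Ω : Type*} (m0 : MeasurableSpace Ω) (ℱ : MeasureTheory.Filtration ℕ m0)
    (A : ℕ → ℕ → Set Ω) (I : ℕ → ℕ → Set ℕ) : Prop where
  gen_top : (⨆ n, (ℱ n : MeasurableSpace Ω)) = m0
  gen : ∀ n, (ℱ n : MeasurableSpace Ω) = MeasurableSpace.generateFrom (Set.range (A n))
  disj : ∀ n, Pairwise (Function.onFun Disjoint (A n))
  cover : ∀ n, (⋃ s, A n s) = Set.univ
  idisj : ∀ n, Pairwise (Function.onFun Disjoint (I n))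
  icover : ∀ n, (⋃ s, I n s) = Set.univ
  refines : ∀ n s, A n s = ⋃ j ∈ I n s, A (n + 1) j

namespace ProbabilityTheory

variable {Ω : Type*} {m0 : MeasurableSpace Ω} {μ : Measure Ω}

theorem toReal_cond_eq_div_of_subset {B C : Set Ω} (hC : MeasurableSet C) (hBC : B ⊆ C) :
    (μ[|C] B).toReal = (μ B).toReal / (μ C).toReal := by
  rw [cond_apply hC, inter_eq_right.mpr hBC, ENNReal.toReal_mul, ENNReal.toReal_inv,
    inv_mul_eq_div]

theorem cond_eq_cond_mul_cond {A B C : Set Ω} (hA : MeasurableSet A) (hB : MeasurableSet B)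
    (hμA : μ A ≠ ∞) (hCB : C ⊆ B) (hBA : B ⊆ A ∨ Disjoint B A) :
    μ[|A] C = μ[|B] C * μ[|A] B := by
  rcases hBA with hBA | hBA
  · have h := cond_mul_eq_inter' (μ := μ[|A]) hB (measure_ne_top _ _) C
    rw [cond_cond_eq_cond_inter' hA hB hμA, inter_eq_right.mpr hBA,
      inter_eq_right.mpr hCB] at h
    exact h.symm
  · simp [cond_apply hA, (hBA.mono_left hCB).symm.inter_eq, hBA.symm.inter_eq]

end ProbabilityTheory

open ProbabilityTheory

theorem MeasureTheory.condExp_eq_integral_cond {Ω : Type*} {m m0 : MeasurableSpace Ω}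
    {μ : Measure Ω} [IsFiniteMeasure μ] (hm : m ≤ m0) {f : Ω → ℝ} (hf : Integrable f μ)
    {B : Set Ω} (hB : MeasurableSet[m] B) (hμB : μ B ≠ 0) {ω : Ω}
    (hBω : B ⊆ @measurableAtom Ω m ω) :
    μ[f | m] ω = ∫ x, f x ∂μ[|B] := by
  have hconst : EqOn (μ[f | m]) (fun _ => μ[f | m] ω) B := fun y hy =>
    @mem_of_mem_measurableAtom Ω m _ _ (hBω hy) _
      (stronglyMeasurable_condExp.measurable (measurableSet_singleton _)) rfl
  have hset := setIntegral_condExp hm hf hB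
  rw [setIntegral_congr_fun (hm B hB) hconst, setIntegral_const, smul_eq_mul] at hset
  rw [ProbabilityTheory.cond, integral_smul_measure, ← hset, ENNReal.toReal_inv, smul_eq_mul,
    ← measureReal_def,
    inv_mul_cancel_left₀ ((measureReal_ne_zero_iff (measure_ne_top μ B)).mpr hμB)]

namespace CondA

variable {Ω : Type*} {m0 : MeasurableSpace Ω} {ℱ : Filtration ℕ m0} {A : ℕ → ℕ → Set Ω}
  {I : ℕ → ℕ → Set ℕ}

theorem measurableSet_cell (hA : CondA m0 ℱ A I) (n s : ℕ) : MeasurableSet[ℱ n] (A n s) := by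
  rw [hA.gen n]
  exact MeasurableSpace.measurableSet_generateFrom ⟨s, rfl⟩

theorem measurableSet_cell' (hA : CondA m0 ℱ A I) (n s : ℕ) : MeasurableSet (A n s) :=
  ℱ.le n _ (hA.measurableSet_cell n s)

theorem exists_mem_cell (hA : CondA m0 ℱ A I) (n : ℕ) (ω : Ω) : ∃ s, ω ∈ A n s :=
  mem_iUnion.mp ((hA.cover n).ge (mem_univ ω))

theorem exists_mem_index (hA : CondA m0 ℱ A I) (n t : ℕ) : ∃ s, t ∈ I n s :=
  mem_iUnion.mp ((hA.icover n).ge (mem_univ t))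

theorem cell_succ_subset (hA : CondA m0 ℱ A I) {n s t : ℕ} (ht : t ∈ I n s) :
    A (n + 1) t ⊆ A n s := by
  rw [hA.refines n s]
  exact subset_biUnion_of_mem ht

theorem subset_or_disjoint_of_le (hA : CondA m0 ℱ A I) {n l : ℕ} (hnl : n ≤ l) (t s : ℕ) :
    A l t ⊆ A n s ∨ Disjoint (A l t) (A n s) := by
  induction l, hnl using Nat.le_induction generalizing t with
  | base =>
    rcases eq_or_ne t s with rfl | hts
    · exact .inl subset_rfl
    · exact .inr (hA.disj n hts)
  | succ l _ ih =>
    obtain ⟨t', ht'⟩ := hA.exists_mem_index l t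
    have hsub := hA.cell_succ_subset ht'
    exact (ih t').imp hsub.trans (Disjoint.mono_left hsub)

theorem isPiSystem_cells (hA : CondA m0 ℱ A I) : IsPiSystem (⋃ n, range (A n)) := by
  rintro _ ⟨_, ⟨n, rfl⟩, ⟨j, rfl⟩⟩ _ ⟨_, ⟨l, rfl⟩, ⟨t, rfl⟩⟩ hne
  rcases le_total n l with h | h
  · rcases hA.subset_or_disjoint_of_le h t j with hsub | hd
    · rw [inter_eq_right.mpr hsub]
      exact mem_iUnion.mpr ⟨l, t, rfl⟩
    · exact absurd hd.symm.inter_eq hne.ne_empty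
  · rcases hA.subset_or_disjoint_of_le h j t with hsub | hd
    · rw [inter_eq_left.mpr hsub]
      exact mem_iUnion.mpr ⟨n, j, rfl⟩
    · exact absurd hd.inter_eq hne.ne_empty

theorem generateFrom_cells (hA : CondA m0 ℱ A I) :
    MeasurableSpace.generateFrom (⋃ n, range (A n)) = m0 := by
  rw [← MeasurableSpace.iSup_generateFrom, ← hA.gen_top]
  exact iSup_congr fun n => (hA.gen n).symm

theorem subset_or_disjoint_of_measurableSet (hA : CondA m0 ℱ A I) {n : ℕ} {B : Set Ω}
    (hB : MeasurableSet[ℱ n] B) (s : ℕ) : A n s ⊆ B ∨ Disjoint (A n s) B := by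
  rw [hA.gen n] at hB
  induction B, hB using MeasurableSpace.generateFrom_induction with
  | hC _ hC =>
    obtain ⟨t, rfl⟩ := hC
    rcases eq_or_ne s t with rfl | hst
    · exact .inl subset_rfl
    · exact .inr (hA.disj n hst)
  | empty => exact .inr (disjoint_empty _)
  | compl _ _ ih =>
    exact ih.symm.imp subset_compl_iff_disjoint_right.mpr disjoint_compl_right_iff_subset.mpr
  | iUnion f _ ih =>
    by_cases h : ∃ i, A n s ⊆ f i
    · obtain ⟨i, hi⟩ := h
      exact .inl (subset_iUnion_of_subset i hi)
    · exact .inr (disjoint_iUnion_right.mpr fun i => (ih i).resolve_left (not_exists.mp h i))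

theorem measurableAtom_eq_cell (hA : CondA m0 ℱ A I) {n s : ℕ} {ω : Ω} (hω : ω ∈ A n s) :
    @measurableAtom Ω (ℱ n) ω = A n s := by
  refine (@measurableAtom_subset Ω (ℱ n) _ _ (hA.measurableSet_cell n s) hω).antisymm ?_
  intro y hy
  simp only [measurableAtom, mem_iInter]
  intro B hωB hB
  exact (hA.subset_or_disjoint_of_measurableSet hB s).elim (· hy)
    fun hd => absurd hωB (disjoint_left.mp hd hω)

theorem measure_cell_eq_tsum (hA : CondA m0 ℱ A I) (μ : Measure Ω) (n s : ℕ) :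
    μ (A n s) = ∑' j : I n s, μ (A (n + 1) j) := by
  rw [hA.refines n s]
  exact measure_biUnion (to_countable _) (fun _ _ _ _ hij => hA.disj (n + 1) hij)
    fun j _ => hA.measurableSet_cell' (n + 1) j

section Conditioning

variable {μ ν : Measure Ω} [IsFiniteMeasure μ] [IsFiniteMeasure ν]

theorem tsum_cond_cell_succ (hA : CondA m0 ℱ A I) {n s : ℕ} (hμ : μ (A n s) ≠ 0) :
    ∑' j : I n s, μ[|A n s] (A (n + 1) j) = 1 := by
  rw [← hA.measure_cell_eq_tsum, cond_apply_self hμ (measure_ne_top _ _)]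

/-- Both families of one-step conditional probabilities sum to `1` over `I n s`, so one cannot
dominate the other termwise without being equal to it. -/
theorem cond_cell_succ_eq_of_le (hA : CondA m0 ℱ A I) {n s : ℕ} (hμ : μ (A n s) ≠ 0)
    (hν : ν (A n s) ≠ 0)
    (hle : ∀ j ∈ I n s, μ[|A n s] (A (n + 1) j) ≤ ν[|A n s] (A (n + 1) j))
    {j : ℕ} (hj : j ∈ I n s) :
    μ[|A n s] (A (n + 1) j) = ν[|A n s] (A (n + 1) j) := by
  by_contra hne
  have hlt := ENNReal.tsum_lt_tsum (i := (⟨j, hj⟩ : I n s))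
    (by rw [hA.tsum_cond_cell_succ hμ]; exact ENNReal.one_ne_top)
    (fun t => hle t t.2) (lt_of_le_of_ne (hle j hj) hne)
  rw [hA.tsum_cond_cell_succ hμ, hA.tsum_cond_cell_succ hν] at hlt
  exact lt_irrefl _ hlt

theorem cond_cell_apply_eq_of_le (hA : CondA m0 ℱ A I) {m n s : ℕ} (hμ : μ (A m s) ≠ 0)
    (hν : ν (A m s) ≠ 0) (hnm : n ≤ m) (j : ℕ) :
    μ[|A m s] (A n j) = ν[|A m s] (A n j) := by
  have hmeas := hA.measurableSet_cell' m s
  rcases hA.subset_or_disjoint_of_le hnm s j with hsub | hd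
  · rw [cond_apply hmeas, cond_apply hmeas, inter_eq_left.mpr hsub,
      ENNReal.inv_mul_cancel hμ (measure_ne_top _ _),
      ENNReal.inv_mul_cancel hν (measure_ne_top _ _)]
  · simp [cond_apply hmeas, hd.inter_eq]

theorem cond_cell_apply_eq_of_cond_cell_succ_eq (hA : CondA m0 ℱ A I) (hμ : ∀ n s, μ (A n s) ≠ 0)
    (hν : ∀ n s, ν (A n s) ≠ 0)
    (hstep : ∀ n s j, j ∈ I n s → μ[|A n s] (A (n + 1) j) = ν[|A n s] (A (n + 1) j))
    (m s n j : ℕ) :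
    μ[|A m s] (A n j) = ν[|A m s] (A n j) := by
  rcases le_total n m with hnm | hmn
  · exact hA.cond_cell_apply_eq_of_le (hμ m s) (hν m s) hnm j
  induction n, hmn using Nat.le_induction generalizing j with
  | base => exact hA.cond_cell_apply_eq_of_le (hμ m s) (hν m s) le_rfl j
  | succ n hmn ih =>
    obtain ⟨t, ht⟩ := hA.exists_mem_index n j
    have hchain (ρ : Measure Ω) [IsFiniteMeasure ρ] :
        ρ[|A m s] (A (n + 1) j) = ρ[|A n t] (A (n + 1) j) * ρ[|A m s] (A n t) :=
      cond_eq_cond_mul_cond (hA.measurableSet_cell' m s) (hA.measurableSet_cell' n t)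
        (measure_ne_top _ _) (hA.cell_succ_subset ht) (hA.subset_or_disjoint_of_le hmn t s)
    rw [hchain μ, hchain ν, hstep _ _ _ ht, ih t]

theorem cond_cell_eq_of_cond_cell_succ_eq (hA : CondA m0 ℱ A I) (hμ : ∀ n s, μ (A n s) ≠ 0)
    (hν : ∀ n s, ν (A n s) ≠ 0)
    (hstep : ∀ n s j, j ∈ I n s → μ[|A n s] (A (n + 1) j) = ν[|A n s] (A (n + 1) j))
    (m s : ℕ) : μ[|A m s] = ν[|A m s] := by
  have := cond_isProbabilityMeasure (μ := μ) (hμ m s)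
  have := cond_isProbabilityMeasure (μ := ν) (hν m s)
  refine ext_of_generate_finite _ hA.generateFrom_cells.symm hA.isPiSystem_cells ?_
    (by rw [measure_univ, measure_univ])
  rintro _ ⟨_, ⟨n, rfl⟩, ⟨j, rfl⟩⟩
  exact hA.cond_cell_apply_eq_of_cond_cell_succ_eq hμ hν hstep m s n j

theorem condExp_eq_of_cond_cell_succ_le (hA : CondA m0 ℱ A I) (hμ : ∀ n s, μ (A n s) ≠ 0)
    (hν : ∀ n s, ν (A n s) ≠ 0)
    (hle : ∀ n s j, j ∈ I n s → μ[|A n s] (A (n + 1) j) ≤ ν[|A n s] (A (n + 1) j))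
    {f : Ω → ℝ} (hfμ : Integrable f μ) (hfν : Integrable f ν) (m : ℕ) :
    μ[f | ℱ m] = ν[f | ℱ m] := by
  have hstep n s j (hj : j ∈ I n s) :=
    hA.cond_cell_succ_eq_of_le (hμ n s) (hν n s) (hle n s) hj
  funext ω
  obtain ⟨s, hω⟩ := hA.exists_mem_cell m ω
  have hatom := (hA.measurableAtom_eq_cell hω).ge
  rw [condExp_eq_integral_cond (ℱ.le m) hfμ (hA.measurableSet_cell m s) (hμ m s) hatom,
    condExp_eq_integral_cond (ℱ.le m) hfν (hA.measurableSet_cell m s) (hν m s) hatom,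
    hA.cond_cell_eq_of_cond_cell_succ_eq hμ hν hstep m s]

end Conditioning

end CondA

theorem stmt16_general {Ω : Type*} {m0 : MeasurableSpace Ω}
    (ℱ : Filtration ℕ m0) (A : ℕ → ℕ → Set Ω) (I : ℕ → ℕ → Set ℕ)
    (hA : CondA m0 ℱ A I)
    (M : Set (Measure Ω))
    (hM_prob : ∀ P ∈ M, IsProbabilityMeasure P)
    (hpos : ∀ P ∈ M, ∀ n s : ℕ, 0 < P (A n s))
    (Pi0 : Measure Ω) (hPi0 : Pi0 ∈ M)
    (hdom : ∀ P ∈ M, ∀ n s j : ℕ, j ∈ I n s →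
      (P (A (n + 1) j)).toReal / (P (A n s)).toReal ≤
      (Pi0 (A (n + 1) j)).toReal / (Pi0 (A n s)).toReal)
    (ξ : Ω → ℝ)
    (hξ_int : ∀ P ∈ M, Integrable ξ P) :
    (∀ P ∈ M, ∀ Q ∈ M, ∀ R ∈ M, ∀ m : ℕ, (P[ξ | ℱ m]) =ᵐ[R] (Q[ξ | ℱ m])) ∧
    (∀ P ∈ M, ∀ Q ∈ M, ∀ m : ℕ,
      (Q[(P[ξ | ℱ (m + 1)]) | ℱ m]) =ᵐ[Q] (P[ξ | ℱ m])) ∧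
    (∀ P ∈ M, ∃ Mart g : ℕ → Ω → ℝ,
      (∀ Q ∈ M, Martingale Mart ℱ Q) ∧
      Adapted ℱ g ∧ (∀ ω, g 0 ω = 0) ∧ (∀ ω, Monotone fun m => g m ω) ∧
      ∀ Q ∈ M, ∀ m : ℕ, (P[ξ | ℱ m]) =ᵐ[Q] fun ω => Mart m ω - g m ω) := by
  have hPi0_prob := hM_prob Pi0 hPi0
  have hcond_eq : ∀ P ∈ M, ∀ m, P[ξ | ℱ m] = Pi0[ξ | ℱ m] := fun P hP m => by
    have := hM_prob P hP
    refine hA.condExp_eq_of_cond_cell_succ_le (fun n s => (hpos P hP n s).ne')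
      (fun n s => (hpos Pi0 hPi0 n s).ne') (fun n s j hj => ?_) (hξ_int P hP) (hξ_int Pi0 hPi0) m
    have hsub := hA.cell_succ_subset hj
    rw [← ENNReal.toReal_le_toReal (measure_ne_top _ _) (measure_ne_top _ _),
      toReal_cond_eq_div_of_subset (hA.measurableSet_cell' n s) hsub,
      toReal_cond_eq_div_of_subset (hA.measurableSet_cell' n s) hsub]
    exact hdom P hP n s j hj
  have hmart : ∀ P ∈ M, ∀ Q ∈ M, Martingale (fun m => P[ξ | ℱ m]) ℱ Q := fun P hP Q hQ => by
    have := hM_prob Q hQ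
    simpa only [hcond_eq P hP, hcond_eq Q hQ] using martingale_condExp ξ ℱ Q
  refine ⟨fun P hP Q hQ _ _ m => .of_eq (by rw [hcond_eq P hP, hcond_eq Q hQ]),
    fun P hP Q hQ m => (hmart P hP Q hQ).condExp_ae_eq m.le_succ,
    fun P hP => ⟨fun m => P[ξ | ℱ m], 0, hmart P hP, fun _ => measurable_const,
      fun _ => rfl, fun _ => monotone_const, fun _ _ _ => .of_eq (by simp)⟩⟩

/-- **Theorem `mars5` of the paper.**
Under condition A, for a convex set `M` of mutually equivalent probability measures
charging all partition cells and dominated on cells by some `P i₀ ∈ M`, and for a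
nonnegative integrable `ξ` with `E^P ξ = 1` for all `P ∈ M`, the conditional
expectation `E^P[ξ | ℱ m]` does not depend on `P ∈ M` and the process
`(E^P[ξ | ℱ m])_m` is a martingale relative to every measure of `M`; in particular
it is a local regular supermartingale. -/
theorem stmt16 {Ω : Type*} {m0 : MeasurableSpace Ω}
    (ℱ : Filtration ℕ m0) (A : ℕ → ℕ → Set Ω) (I : ℕ → ℕ → Set ℕ)
    (hA : CondA m0 ℱ A I)
    (M : Set (Measure Ω)) (hMne : M.Nonempty)
    (hM_prob : ∀ P ∈ M, IsProbabilityMeasure P)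
    (hM_conv : ∀ P ∈ M, ∀ Q ∈ M, ∀ α : ℝ, 0 ≤ α → α ≤ 1 →
      (ENNReal.ofReal (1 - α)) • P + (ENNReal.ofReal α) • Q ∈ M)
    (hM_equiv : ∀ P ∈ M, ∀ Q ∈ M, P ≪ Q)
    (hpos : ∀ P ∈ M, ∀ n s : ℕ, 0 < P (A n s))
    (Pi0 : Measure Ω) (hPi0 : Pi0 ∈ M)
    (hdom : ∀ P ∈ M, ∀ n s j : ℕ, j ∈ I n s →
      (P (A (n + 1) j)).toReal / (P (A n s)).toReal ≤
      (Pi0 (A (n + 1) j)).toReal / (Pi0 (A n s)).toReal)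
    (ξ : Ω → ℝ) (hξ_nonneg : ∀ ω, 0 ≤ ξ ω)
    (hξ_int : ∀ P ∈ M, Integrable ξ P)
    (hξ_exp : ∀ P ∈ M, ∫ ω, ξ ω ∂P = 1) :
    (∀ P ∈ M, ∀ Q ∈ M, ∀ R ∈ M, ∀ m : ℕ, (P[ξ | ℱ m]) =ᵐ[R] (Q[ξ | ℱ m])) ∧
    (∀ P ∈ M, ∀ Q ∈ M, ∀ m : ℕ,
      (Q[(P[ξ | ℱ (m + 1)]) | ℱ m]) =ᵐ[Q] (P[ξ | ℱ m])) ∧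
    (∀ P ∈ M, ∃ Mart g : ℕ → Ω → ℝ,
      (∀ Q ∈ M, Martingale Mart ℱ Q) ∧
      Adapted ℱ g ∧ (∀ ω, g 0 ω = 0) ∧ (∀ ω, Monotone fun m => g m ω) ∧
      ∀ Q ∈ M, ∀ m : ℕ, (P[ξ | ℱ m]) =ᵐ[Q] fun ω => Mart m ω - g m ω) :=
  stmt16_general ℱ A I hA M hM_prob hpos Pi0 hPi0 hdom ξ hξ_int
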